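/- In the Brown graph B(q) for an odd prime power q, no quadric vertex lies on a triangle. -/

import Mathlib

/-- `G` contains no cycle of length 4 as a (not necessarily induced) subgraph. -/
def C4Free {V : Type*} (G : SimpleGraph V) : Prop :=
  ¬ ∃ a b c d : V, a ≠ b ∧ a ≠ c ∧ a ≠ d ∧ b ≠ c ∧ b ≠ d ∧ c ≠ d ∧
    G.Adj a b ∧ G.Adj b c ∧ G.Adj c d ∧ G.Adj d a

/-- `G` has edge-connectivity at least `k`: it stays connected after
deleting any set of fewer than `k` edges. -/
def EdgeConnAtLeast {V : Type*} (G : SimpleGraph V) (k : ℕ) : Prop :=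
  ∀ s : Finset (Sym2 V), s.card < k → (G.deleteEdges ↑s).Connected

/-- The Brown graph on the projective plane over `F`: vertices are classes of
nonzero vectors of `F³`, adjacency is orthogonality of representatives. -/
def brown (F : Type*) [Field F] : SimpleGraph (Projectivization F (Fin 3 → F)) where
  Adj x y := x ≠ y ∧ ∑ i, x.rep i * y.rep i = 0
  symm := ⟨fun x y h => ⟨h.1.symm, by
    rw [← h.2]; exact Finset.sum_congr rfl fun i _ => mul_comm _ _⟩⟩
  loopless := ⟨fun x h => h.1 rfl⟩

/-- A vertex of the Brown graph is quadric if its representatives are self-orthogonal. -/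
def IsQuadric {F : Type*} [Field F] (x : Projectivization F (Fin 3 → F)) : Prop :=
  ∑ i, x.rep i * x.rep i = 0

/-!
The only point orthogonal to two distinct points `x ≠ y` of the projective plane is their cross
product `x × y`. A quadric `x` is orthogonal to itself, so on a triangle `x y z` both `x` and `z`
are orthogonal to `x` and `y`, forcing `z = x × y = x`.
-/

open Projectivization
open scoped LinearAlgebra.Projectivization

lemma Projectivization.orthogonal_iff_dotProduct_rep {F : Type*} [Field F] {m : Type*} [Fintype m]
    {x y : ℙ F (m → F)} : x.orthogonal y ↔ x.rep ⬝ᵥ y.rep = 0 := by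
  conv_lhs => rw [← x.mk_rep, ← y.mk_rep]
  exact orthogonal_mk _ _

lemma Projectivization.eq_cross_of_orthogonal {F : Type*} [Field F] [DecidableEq F]
    {u v w : ℙ F (Fin 3 → F)} (hvw : v ≠ w) (huv : u.orthogonal v) (huw : u.orthogonal w) :
    u = cross v w := by
  induction u with | h u hu =>
  induction v with | h v hv =>
  induction w with | h w hw =>
  rw [orthogonal_mk] at huv huw
  rw [cross_mk_of_ne hv hw hvw, mk_eq_mk_iff_crossProduct_eq_zero,
    cross_cross_eq_smul_sub_smul', huw, dotProduct_comm, huv, zero_smul, zero_smul, sub_zero]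

lemma brown_adj_iff {F : Type*} [Field F] {x y : ℙ F (Fin 3 → F)} :
    (brown F).Adj x y ↔ x ≠ y ∧ x.orthogonal y := by
  rw [orthogonal_iff_dotProduct_rep]
  rfl

lemma isQuadric_iff_orthogonal_self {F : Type*} [Field F] {x : ℙ F (Fin 3 → F)} :
    IsQuadric x ↔ x.orthogonal x := by
  rw [orthogonal_iff_dotProduct_rep]
  rfl

theorem brown_quadric_not_on_triangle_general (F : Type*) [Field F]
    (x : Projectivization F (Fin 3 → F)) (hx : IsQuadric x) :
    ¬ ∃ y z : Projectivization F (Fin 3 → F),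
        (brown F).Adj x y ∧ (brown F).Adj y z ∧ (brown F).Adj z x := by
  classical
  rintro ⟨y, z, hxy, hyz, hzx⟩
  rw [brown_adj_iff] at hxy hyz hzx
  rw [isQuadric_iff_orthogonal_self] at hx
  have hx_cross : x = cross x y := eq_cross_of_orthogonal hxy.1 hx hxy.2
  have hz_cross : z = cross x y :=
    eq_cross_of_orthogonal hxy.1 hzx.2 (orthogonal_comm.mp hyz.2)
  exact hzx.1 (hz_cross.trans hx_cross.symm)

theorem brown_quadric_not_on_triangle (F : Type*) [Field F] [Fintype F]
    (hodd : Odd (Fintype.card F))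
    (x : Projectivization F (Fin 3 → F)) (hx : IsQuadric x) :
    ¬ ∃ y z : Projectivization F (Fin 3 → F),
        (brown F).Adj x y ∧ (brown F).Adj y z ∧ (brown F).Adj z x :=
  brown_quadric_not_on_triangle_general F x hx
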